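/- (Residual norm of the Gl-QGMRES iterate.) Let A ∈ ℍ^{n×n}, B, X₀ ∈ ℍ^{n×m}, R₀ := B − A X₀, β := ‖R₀‖ > 0, V₁ := R₀ β^{-1}, and assume the Arnoldi hypotheses through step k; let H̄_k ∈ ℍ^{(k+1)×k} be the matrix with entries h_{i,j} (set to 0 for i > j+1). Suppose Q ∈ ℍ^{(k+1)×(k+1)} satisfies Q^* Q = I and Q H̄_k = [R̃; 0], where R̃ ∈ ℍ^{k×k} is upper triangular with nonzero diagonal entries. Denote by q ∈ ℍ^{k+1} the first column of Q. If y ∈ ℍ^k satisfies R̃ y = β q(1:k) (the first k components of β q), then the Gl-QGMRES iterate X_k := X₀ + Σ_{j=1}^k V_j y_j satisfies ‖B − A X_k‖ = β |q_{k+1}|, where q_{k+1} is the last component of q; moreover this value is the minimum of ‖B − A(X₀ + Σ_j V_j z_j)‖ over all z ∈ ℍ^k. -/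

import Mathlib

/-!
Write the residual of `X₀ + Σ_j V_j z_j` in the Arnoldi basis: since `R₀ = V₁ β` and
`A V_j = Σ_i V_i h_{i,j}`, it equals `Σ_i V_i c_i` with `c = β e₁ − H̄_k z`. The `V_i` are
orthonormal for the trace form `tr (Y^* X)`, so the residual norm is the Euclidean norm of `c`,
which the unitary `Q` preserves. The vector `Q c` has first `k` entries `β q(1:k) − R̃ z`, which
vanish at `z = y`, and last entry `β q_{k+1}`, independent of `z`.
-/

open Matrix Quaternion

noncomputable section

/-- Entrywise right scalar multiple of a quaternion matrix. -/
def qsmul {n m : ℕ} (X : Matrix (Fin n) (Fin m) ℍ[ℝ]) (a : ℍ[ℝ]) :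
    Matrix (Fin n) (Fin m) ℍ[ℝ] := fun i j => X i j * a

/-- Frobenius norm of a quaternion matrix: `‖X‖ = (Re tr(X^* X))^{1/2}`. -/
def qnorm {n m : ℕ} (X : Matrix (Fin n) (Fin m) ℍ[ℝ]) : ℝ :=
  Real.sqrt (Matrix.trace (Xᴴ * X)).re

/-- The Arnoldi hypotheses through step `k`. -/
structure ArnoldiData (n m k : ℕ) (A : Matrix (Fin n) (Fin n) ℍ[ℝ])
    (V : ℕ → Matrix (Fin n) (Fin m) ℍ[ℝ]) (h : ℕ → ℕ → ℍ[ℝ]) : Prop where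
  normV1 : qnorm (V 1) = 1
  hdef : ∀ j ∈ Finset.Icc 1 k, ∀ i ∈ Finset.Icc 1 j,
      h i j = Matrix.trace ((V i)ᴴ * (A * V j))
  hsub : ∀ j ∈ Finset.Icc 1 k,
      h (j+1) j = (qnorm (A * V j - ∑ i ∈ Finset.Icc 1 j, qsmul (V i) (h i j)) : ℍ[ℝ])
  hsub_ne : ∀ j ∈ Finset.Icc 1 k, h (j+1) j ≠ 0
  vdef : ∀ j ∈ Finset.Icc 1 k,
      V (j+1) = qsmul (A * V j - ∑ i ∈ Finset.Icc 1 j, qsmul (V i) (h i j)) (h (j+1) j)⁻¹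

open MulOpposite

@[norm_cast]
lemma Quaternion.coe_sum {ι : Type*} (s : Finset ι) (f : ι → ℝ) :
    ((∑ i ∈ s, f i : ℝ) : ℍ[ℝ]) = ∑ i ∈ s, (f i : ℍ[ℝ]) :=
  map_sum (algebraMap ℝ ℍ[ℝ]) f s

section FrobeniusTrace

variable {ι κ : Type*} [Fintype ι] [Fintype κ]

lemma qsmul_eq_op_smul {n m : ℕ} (X : Matrix (Fin n) (Fin m) ℍ[ℝ]) (a : ℍ[ℝ]) :
    qsmul X a = op a • X :=
  rfl

lemma qnorm_nonneg {n m : ℕ} (X : Matrix (Fin n) (Fin m) ℍ[ℝ]) : 0 ≤ qnorm X :=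
  Real.sqrt_nonneg _

lemma trace_conjTranspose_mul_self (X : Matrix ι κ ℍ[ℝ]) :
    trace (Xᴴ * X) = ((∑ j, ∑ i, normSq (X i j) : ℝ) : ℍ[ℝ]) := by
  simp only [trace, Matrix.diag, mul_apply, conjTranspose_apply, star_mul_self]
  push_cast
  rfl

lemma trace_conjTranspose_mul_self_eq_qnorm_sq {n m : ℕ} (X : Matrix (Fin n) (Fin m) ℍ[ℝ]) :
    trace (Xᴴ * X) = ((qnorm X ^ 2 : ℝ) : ℍ[ℝ]) := by
  rw [qnorm, trace_conjTranspose_mul_self, re_coe, Real.sq_sqrt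
    (Finset.sum_nonneg fun _ _ => Finset.sum_nonneg fun _ _ => normSq_nonneg)]

lemma trace_conjTranspose_mul_comm (X Y : Matrix ι κ ℍ[ℝ]) :
    trace (Yᴴ * X) = star (trace (Xᴴ * Y)) := by
  rw [← trace_conjTranspose, conjTranspose_mul, conjTranspose_conjTranspose]

lemma trace_conjTranspose_op_smul_mul_op_smul (X Y : Matrix ι κ ℍ[ℝ]) (a b : ℍ[ℝ]) :
    trace ((op a • X)ᴴ * (op b • Y)) = star a * trace (Xᴴ * Y) * b := by
  simp only [trace, Matrix.diag, mul_apply, conjTranspose_apply, Matrix.smul_apply,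
    op_smul_eq_mul, star_mul, Finset.mul_sum, Finset.sum_mul, mul_assoc]

lemma trace_conjTranspose_mul_op_smul (X Y : Matrix ι κ ℍ[ℝ]) (b : ℍ[ℝ]) :
    trace (Xᴴ * (op b • Y)) = trace (Xᴴ * Y) * b := by
  simp only [trace, Matrix.diag, mul_apply, Matrix.smul_apply, op_smul_eq_mul, Finset.sum_mul,
    mul_assoc]

lemma qnorm_sum_op_smul_sq_of_orthonormal {n m : ℕ} [DecidableEq ι]
    {U : ι → Matrix (Fin n) (Fin m) ℍ[ℝ]}
    (hU : ∀ i j, trace ((U i)ᴴ * U j) = if i = j then 1 else 0) (a : ι → ℍ[ℝ]) :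
    qnorm (∑ i, op (a i) • U i) ^ 2 = ∑ i, normSq (a i) := by
  apply Quaternion.coe_injective
  rw [← trace_conjTranspose_mul_self_eq_qnorm_sq, conjTranspose_sum, Matrix.sum_mul]
  simp only [Matrix.mul_sum, trace_sum, trace_conjTranspose_op_smul_mul_op_smul, hU, mul_ite,
    ite_mul, mul_one, mul_zero, zero_mul, Finset.sum_ite_eq, Finset.mem_univ, if_true,
    star_mul_self]
  push_cast
  rfl

lemma star_dotProduct_self (v : ι → ℍ[ℝ]) :
    star v ⬝ᵥ v = ((∑ i, normSq (v i) : ℝ) : ℍ[ℝ]) := by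
  simp only [dotProduct, Pi.star_apply, star_mul_self]
  push_cast
  rfl

lemma sum_normSq_mulVec_of_conjTranspose_mul_self [DecidableEq ι] {Q : Matrix κ ι ℍ[ℝ]}
    (hQ : Qᴴ * Q = 1) (v : ι → ℍ[ℝ]) :
    ∑ i, normSq ((Q *ᵥ v) i) = ∑ i, normSq (v i) := by
  apply Quaternion.coe_injective
  rw [← star_dotProduct_self, ← star_dotProduct_self, star_mulVec, ← dotProduct_mulVec,
    mulVec_mulVec, hQ, one_mulVec]

lemma sum_op_smul_mulVec {M : Type*} [AddCommGroup M] [Module ℍ[ℝ]ᵐᵒᵖ M] (U : ι → M)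
    (H : Matrix ι κ ℍ[ℝ]) (z : κ → ℍ[ℝ]) :
    ∑ i, op ((H *ᵥ z) i) • U i = ∑ j, op (z j) • ∑ i, op (H i j) • U i := by
  simp only [mulVec, dotProduct, Finset.op_sum, op_mul, Finset.sum_smul, mul_smul,
    Finset.smul_sum]
  exact Finset.sum_comm

end FrobeniusTrace

namespace ArnoldiData

variable {n m k : ℕ} {A : Matrix (Fin n) (Fin n) ℍ[ℝ]}
  {V : ℕ → Matrix (Fin n) (Fin m) ℍ[ℝ]} {h : ℕ → ℕ → ℍ[ℝ]}

lemma trace_conjTranspose_mul_self_succ (hA : ArnoldiData n m k A V h) {j : ℕ}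
    (hj : j ∈ Finset.Icc 1 k) : trace ((V (j + 1))ᴴ * V (j + 1)) = 1 := by
  have hW : qnorm (A * V j - ∑ i ∈ Finset.Icc 1 j, qsmul (V i) (h i j)) ≠ 0 := fun h0 =>
    hA.hsub_ne j hj (by rw [hA.hsub j hj, h0, coe_zero])
  rw [hA.vdef j hj, qsmul_eq_op_smul, trace_conjTranspose_op_smul_mul_op_smul,
    trace_conjTranspose_mul_self_eq_qnorm_sq, hA.hsub j hj, ← coe_inv, star_coe, ← coe_mul,
    ← coe_mul, ← coe_one]
  congr 1
  field_simp

lemma trace_conjTranspose_mul_succ_eq_zero (hA : ArnoldiData n m k A V h) {j : ℕ}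
    (hj : j ∈ Finset.Icc 1 k)
    (horth : ∀ i ∈ Finset.Icc 1 j, ∀ l ∈ Finset.Icc 1 j,
      trace ((V i)ᴴ * V l) = if i = l then 1 else 0)
    {i : ℕ} (hi : i ∈ Finset.Icc 1 j) : trace ((V i)ᴴ * V (j + 1)) = 0 := by
  have hsum : ∑ l ∈ Finset.Icc 1 j, trace ((V i)ᴴ * qsmul (V l) (h l j)) = h i j := by
    simp only [qsmul_eq_op_smul, trace_conjTranspose_mul_op_smul]
    rw [Finset.sum_eq_single_of_mem i hi fun l hl hli => by rw [horth i hi l hl, if_neg hli.symm,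
      zero_mul], horth i hi i hi, if_pos rfl, one_mul]
  rw [hA.vdef j hj, qsmul_eq_op_smul, trace_conjTranspose_mul_op_smul, Matrix.mul_sub,
    Matrix.mul_sum, trace_sub, trace_sum, hsum, ← hA.hdef j hj i hi, sub_self, zero_mul]

theorem trace_conjTranspose_mul_eq_ite (hA : ArnoldiData n m k A V h) :
    ∀ s ≤ k + 1, ∀ i ∈ Finset.Icc 1 s, ∀ j ∈ Finset.Icc 1 s,
      trace ((V i)ᴴ * V j) = if i = j then 1 else 0 := by
  intro s
  induction s with
  | zero => simp
  | succ s ih =>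
    intro hs i hi j hj
    simp only [Finset.mem_Icc] at hi hj
    rcases Nat.eq_zero_or_pos s with rfl | hs0
    · obtain rfl : i = 1 := by omega
      obtain rfl : j = 1 := by omega
      rw [trace_conjTranspose_mul_self_eq_qnorm_sq, hA.normV1, if_pos rfl, one_pow, coe_one]
    have hsk : s ∈ Finset.Icc 1 k := Finset.mem_Icc.2 ⟨hs0, by omega⟩
    have horth := ih (by omega)
    have hmem {l : ℕ} (hl1 : 1 ≤ l) (hls : l ≤ s) : l ∈ Finset.Icc 1 s :=
      Finset.mem_Icc.2 ⟨hl1, hls⟩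
    rcases (by omega : i ≤ s ∨ i = s + 1) with his | rfl <;>
      rcases (by omega : j ≤ s ∨ j = s + 1) with hjs | rfl
    · exact horth i (hmem hi.1 his) j (hmem hj.1 hjs)
    · rw [hA.trace_conjTranspose_mul_succ_eq_zero hsk horth (hmem hi.1 his), if_neg (by omega)]
    · rw [trace_conjTranspose_mul_comm, hA.trace_conjTranspose_mul_succ_eq_zero hsk horth
        (hmem hj.1 hjs), star_zero, if_neg (by omega)]
    · rw [hA.trace_conjTranspose_mul_self_succ hsk, if_pos rfl]

theorem trace_conjTranspose_mul_eq_ite_fin (hA : ArnoldiData n m k A V h) (i j : Fin (k + 1)) :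
    trace ((V ((i : ℕ) + 1))ᴴ * V ((j : ℕ) + 1)) = if i = j then 1 else 0 := by
  rw [hA.trace_conjTranspose_mul_eq_ite (k + 1) le_rfl _ (Finset.mem_Icc.2 ⟨by omega, by omega⟩)
    _ (Finset.mem_Icc.2 ⟨by omega, by omega⟩)]
  simp only [add_left_inj, Fin.val_inj]

lemma mul_eq_sum (hA : ArnoldiData n m k A V h) {j : ℕ} (hj : j ∈ Finset.Icc 1 k) :
    A * V j = ∑ i ∈ Finset.Icc 1 (j + 1), op (h i j) • V i := by
  rw [Finset.sum_Icc_succ_top (by omega), hA.vdef j hj, qsmul_eq_op_smul, smul_smul, ← op_mul,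
    inv_mul_cancel₀ (hA.hsub_ne j hj), op_one, one_smul]
  simp only [qsmul_eq_op_smul]
  abel

lemma mul_eq_sum_hessenberg (hA : ArnoldiData n m k A V h)
    {Hbar : Matrix (Fin (k + 1)) (Fin k) ℍ[ℝ]}
    (hHbar : ∀ (i : Fin (k + 1)) (j : Fin k),
      Hbar i j = if (j : ℕ) + 1 < (i : ℕ) then 0 else h ((i : ℕ) + 1) ((j : ℕ) + 1))
    (j : Fin k) :
    A * V ((j : ℕ) + 1) = ∑ i : Fin (k + 1), op (Hbar i j) • V ((i : ℕ) + 1) := by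
  set g : ℕ → Matrix (Fin n) (Fin m) ℍ[ℝ] := fun l =>
    if l ≤ (j : ℕ) + 2 then op (h l ((j : ℕ) + 1)) • V l else 0
  calc A * V ((j : ℕ) + 1)
        = ∑ l ∈ Finset.Icc 1 ((j : ℕ) + 2), op (h l ((j : ℕ) + 1)) • V l :=
        hA.mul_eq_sum (Finset.mem_Icc.2 ⟨by omega, by omega⟩)
    _ = ∑ l ∈ Finset.Icc 1 (k + 1), g l := by
        rw [← Finset.sum_filter]
        congr 1
        ext l
        simp only [Finset.mem_filter, Finset.mem_Icc]
        omega
    _ = ∑ t ∈ Finset.range (k + 1), g (t + 1) := by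
        rw [← Finset.Ico_add_one_right_eq_Icc, Finset.sum_Ico_eq_sum_range]
        simp only [add_tsub_cancel_right, add_comm 1]
    _ = ∑ i : Fin (k + 1), op (Hbar i j) • V ((i : ℕ) + 1) := by
        rw [← Fin.sum_univ_eq_sum_range]
        refine Finset.sum_congr rfl fun i _ => ?_
        simp only [g, hHbar]
        split_ifs <;> first | omega | simp

end ArnoldiData

lemma sub_mul_add_sum_eq {n m k : ℕ} {A : Matrix (Fin n) (Fin n) ℍ[ℝ]}
    {V : ℕ → Matrix (Fin n) (Fin m) ℍ[ℝ]} {H : Matrix (Fin (k + 1)) (Fin k) ℍ[ℝ]}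
    (hAV : ∀ j : Fin k, A * V ((j : ℕ) + 1) = ∑ i, op (H i j) • V ((i : ℕ) + 1))
    {B X₀ : Matrix (Fin n) (Fin m) ℍ[ℝ]} {b : ℍ[ℝ]} (hR : B - A * X₀ = op b • V 1)
    (z : Fin k → ℍ[ℝ]) :
    B - A * (X₀ + ∑ j : Fin k, op (z j) • V ((j : ℕ) + 1)) =
      ∑ i : Fin (k + 1), op (((Pi.single 0 b : Fin (k + 1) → ℍ[ℝ]) - H *ᵥ z) i) •
        V ((i : ℕ) + 1) := by
  have hsingle : ∑ i : Fin (k + 1), op ((Pi.single 0 b : Fin (k + 1) → ℍ[ℝ]) i) •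
      V ((i : ℕ) + 1) = op b • V 1 := by
    rw [Fintype.sum_eq_single 0 fun i hi => by rw [Pi.single_eq_of_ne hi, op_zero, zero_smul],
      Pi.single_eq_same, Fin.val_zero]
  simp only [Pi.sub_apply, op_sub, sub_smul, Finset.sum_sub_distrib, hsingle,
    sum_op_smul_mulVec (fun i : Fin (k + 1) => V ((i : ℕ) + 1)), ← hAV, ← hR, Matrix.mul_add,
    Matrix.mul_sum, Matrix.mul_smul]
  abel

lemma sum_normSq_mulVec_single_sub_mulVec {k : ℕ}
    {Q : Matrix (Fin (k + 1)) (Fin (k + 1)) ℍ[ℝ]} {H : Matrix (Fin (k + 1)) (Fin k) ℍ[ℝ]}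
    {R : Matrix (Fin k) (Fin k) ℍ[ℝ]} (hQR : ∀ i j, (Q * H) (Fin.castSucc i) j = R i j)
    (hQR0 : ∀ j, (Q * H) (Fin.last k) j = 0) (b : ℍ[ℝ]) (z : Fin k → ℍ[ℝ]) :
    ∑ i, normSq ((Q *ᵥ ((Pi.single 0 b : Fin (k + 1) → ℍ[ℝ]) - H *ᵥ z)) i) =
      ∑ i : Fin k, normSq (Q i.castSucc 0 * b - (R *ᵥ z) i) +
        normSq (Q (Fin.last k) 0 * b) := by
  rw [mulVec_sub, mulVec_mulVec, mulVec_single, Fin.sum_univ_castSucc]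
  simp only [Pi.sub_apply, Pi.smul_apply, col_apply, op_smul_eq_mul, mulVec, dotProduct, hQR,
    hQR0, zero_mul, Finset.sum_const_zero, sub_zero]

theorem glqgmres_residual_norm_general (n m k : ℕ)
    (A : Matrix (Fin n) (Fin n) ℍ[ℝ]) (B X₀ : Matrix (Fin n) (Fin m) ℍ[ℝ])
    (R₀ : Matrix (Fin n) (Fin m) ℍ[ℝ]) (hR₀ : R₀ = B - A * X₀)
    (β : ℝ) (hβpos : 0 < β)
    (V : ℕ → Matrix (Fin n) (Fin m) ℍ[ℝ]) (hV1 : V 1 = qsmul R₀ ((β : ℍ[ℝ])⁻¹))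
    (h : ℕ → ℕ → ℍ[ℝ]) (hA : ArnoldiData n m k A V h)
    (Hbar : Matrix (Fin (k + 1)) (Fin k) ℍ[ℝ])
    (hHbar : ∀ (i : Fin (k + 1)) (j : Fin k),
      Hbar i j = if (j : ℕ) + 1 < (i : ℕ) then 0 else h ((i : ℕ) + 1) ((j : ℕ) + 1))
    (Q : Matrix (Fin (k + 1)) (Fin (k + 1)) ℍ[ℝ]) (hQ : Qᴴ * Q = 1)
    (Rt : Matrix (Fin k) (Fin k) ℍ[ℝ])
    (hQR : ∀ (i : Fin k) (j : Fin k), (Q * Hbar) (Fin.castSucc i) j = Rt i j)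
    (hQR0 : ∀ j : Fin k, (Q * Hbar) (Fin.last k) j = 0)
    (y : Fin k → ℍ[ℝ])
    (hy : ∀ i : Fin k,
      ∑ j : Fin k, Rt i j * y j = (β : ℍ[ℝ]) * Q (Fin.castSucc i) 0)
    (Xk : Matrix (Fin n) (Fin m) ℍ[ℝ])
    (hXk : Xk = X₀ + ∑ j : Fin k, qsmul (V ((j : ℕ) + 1)) (y j)) :
    qnorm (B - A * Xk) = β * ‖Q (Fin.last k) 0‖ ∧
    ∀ z : Fin k → ℍ[ℝ],
      qnorm (B - A * Xk) ≤
        qnorm (B - A * (X₀ + ∑ j : Fin k, qsmul (V ((j : ℕ) + 1)) (z j))) := by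
  have hR : B - A * X₀ = op (β : ℍ[ℝ]) • V 1 := by
    rw [hV1, ← hR₀, qsmul_eq_op_smul, smul_smul, ← op_mul,
      inv_mul_cancel₀ fun h0 => hβpos.ne' (coe_injective h0), op_one, one_smul]
  have hres (z : Fin k → ℍ[ℝ]) :
      qnorm (B - A * (X₀ + ∑ j : Fin k, qsmul (V ((j : ℕ) + 1)) (z j))) ^ 2 =
        ∑ i : Fin k, normSq ((β : ℍ[ℝ]) * Q i.castSucc 0 - (Rt *ᵥ z) i) +
          (β * ‖Q (Fin.last k) 0‖) ^ 2 := by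
    simp only [qsmul_eq_op_smul]
    rw [sub_mul_add_sum_eq (hA.mul_eq_sum_hessenberg hHbar) hR,
      qnorm_sum_op_smul_sq_of_orthonormal hA.trace_conjTranspose_mul_eq_ite_fin,
      ← sum_normSq_mulVec_of_conjTranspose_mul_self hQ,
      sum_normSq_mulVec_single_sub_mulVec hQR hQR0]
    simp only [← coe_commutes, map_mul, normSq_coe, normSq_eq_norm_mul_self]
    ring
  have hresy : qnorm (B - A * Xk) ^ 2 = (β * ‖Q (Fin.last k) 0‖) ^ 2 := by
    have hRty (i : Fin k) : (Rt *ᵥ y) i = β * Q i.castSucc 0 := hy i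
    simp only [hXk, hres, hRty, sub_self, map_zero, Finset.sum_const_zero, zero_add]
  have hnorm := (pow_left_inj₀ (qnorm_nonneg _) (by positivity) two_ne_zero).1 hresy
  refine ⟨hnorm, fun z => ?_⟩
  rw [← pow_le_pow_iff_left₀ (qnorm_nonneg _) (qnorm_nonneg _) two_ne_zero, hresy, hres z]
  exact le_add_of_nonneg_left (Finset.sum_nonneg fun _ _ => normSq_nonneg)

/-- Residual norm of the Gl-QGMRES iterate: with `R₀ = B − A X₀`,
`β = ‖R₀‖ > 0`, `V₁ = R₀ β⁻¹`, the Arnoldi hypotheses through step `k`, the extended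
Hessenberg matrix `H̄_k ∈ ℍ^{(k+1)×k}`, a unitary `Q` with `Q H̄_k = [R̃; 0]`, `R̃` upper
triangular with nonzero diagonal, and `q` the first column of `Q`: if `R̃ y = β q(1:k)`
then `X_k = X₀ + Σ_j V_j y_j` satisfies `‖B − A X_k‖ = β |q_{k+1}|`, and this value is the
minimum of the residual norm over the affine Krylov subspace. -/
theorem glqgmres_residual_norm (n m k : ℕ)
    (A : Matrix (Fin n) (Fin n) ℍ[ℝ]) (B X₀ : Matrix (Fin n) (Fin m) ℍ[ℝ])
    (R₀ : Matrix (Fin n) (Fin m) ℍ[ℝ]) (hR₀ : R₀ = B - A * X₀)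
    (β : ℝ) (hβ : β = qnorm R₀) (hβpos : 0 < β)
    (V : ℕ → Matrix (Fin n) (Fin m) ℍ[ℝ]) (hV1 : V 1 = qsmul R₀ ((β : ℍ[ℝ])⁻¹))
    (h : ℕ → ℕ → ℍ[ℝ]) (hA : ArnoldiData n m k A V h)
    (Hbar : Matrix (Fin (k + 1)) (Fin k) ℍ[ℝ])
    (hHbar : ∀ (i : Fin (k + 1)) (j : Fin k),
      Hbar i j = if (j : ℕ) + 1 < (i : ℕ) then 0 else h ((i : ℕ) + 1) ((j : ℕ) + 1))
    (Q : Matrix (Fin (k + 1)) (Fin (k + 1)) ℍ[ℝ]) (hQ : Qᴴ * Q = 1)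
    (Rt : Matrix (Fin k) (Fin k) ℍ[ℝ])
    (hQR : ∀ (i : Fin k) (j : Fin k), (Q * Hbar) (Fin.castSucc i) j = Rt i j)
    (hQR0 : ∀ j : Fin k, (Q * Hbar) (Fin.last k) j = 0)
    (hRtTri : ∀ i j : Fin k, (j : ℕ) < (i : ℕ) → Rt i j = 0)
    (hRtDiag : ∀ i : Fin k, Rt i i ≠ 0)
    (y : Fin k → ℍ[ℝ])
    (hy : ∀ i : Fin k,
      ∑ j : Fin k, Rt i j * y j = (β : ℍ[ℝ]) * Q (Fin.castSucc i) 0)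
    (Xk : Matrix (Fin n) (Fin m) ℍ[ℝ])
    (hXk : Xk = X₀ + ∑ j : Fin k, qsmul (V ((j : ℕ) + 1)) (y j)) :
    qnorm (B - A * Xk) = β * ‖Q (Fin.last k) 0‖ ∧
    ∀ z : Fin k → ℍ[ℝ],
      qnorm (B - A * Xk) ≤
        qnorm (B - A * (X₀ + ∑ j : Fin k, qsmul (V ((j : ℕ) + 1)) (z j))) :=
  glqgmres_residual_norm_general n m k A B X₀ R₀ hR₀ β hβpos V hV1 h hA Hbar hHbar Q hQ Rt hQR hQR0
    y hy Xk hXk
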